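/- arXiv:2108.07262 — 4 statements merged into one kernel-verified Lean document; each statement's English description precedes it below -/
import Mathlib

section
/- Let p⁰, q₀ ∈ ℝ and P, Q ∈ M₃(ℝ) with p⁰ ≠ 0, and suppose (C, A) ∈ ℂ × M₃(ℂ) solves the attractor system for (p⁰, q₀, P, Q). Write ζ⁰ := Im(C) and X := Im(A) (entrywise imaginary part, a real 3×3 matrix). Then Cof(X) = R/|C|² and 2·ζ⁰·|C|²·det(X) = −M. -/
open Matrix Complex

/-- The cofactor matrix of a 3×3 matrix: the transpose of the adjugate,
so that `Xᵀ * Cof X = det X • 1`. -/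
noncomputable def Cof {R : Type*} [CommRing R] (A : Matrix (Fin 3) (Fin 3) R) :
    Matrix (Fin 3) (Fin 3) R := (Matrix.adjugate A)ᵀ

/-- `R := Cof(P) + p⁰ • Q`. -/
noncomputable def attrR (p0 : ℝ) (P Q : Matrix (Fin 3) (Fin 3) ℝ) :
    Matrix (Fin 3) (Fin 3) ℝ := Cof P + p0 • Q

/-- `M := 2 det P + (p⁰)² q₀ + p⁰ tr(Pᵀ Q)`. -/
noncomputable def attrM (p0 q0 : ℝ) (P Q : Matrix (Fin 3) (Fin 3) ℝ) : ℝ :=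
  2 * P.det + p0 ^ 2 * q0 + p0 * (Pᵀ * Q).trace

/-- `(C, A)` solves the attractor system for `(p⁰, q₀, P, Q)`. -/
def SolvesAttractor (p0 q0 : ℝ) (P Q : Matrix (Fin 3) (Fin 3) ℝ)
    (C : ℂ) (A : Matrix (Fin 3) (Fin 3) ℂ) : Prop :=
  C.re = p0 ∧ (∀ i j, (C * A i j).re = P i j) ∧
    (∀ i j, (C * Cof A i j).re = - Q i j) ∧ (C * A.det).re = q0

set_option maxHeartbeats 3000000 in
/-- If `p⁰ ≠ 0` and `(C, A)` solves the attractor system, then with `ζ⁰ = Im C` and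
`X = Im A` we have `Cof X = R/|C|²` and `2 ζ⁰ |C|² det X = −M`. -/
theorem cof_imA_and_det_imA (p0 q0 : ℝ) (P Q : Matrix (Fin 3) (Fin 3) ℝ)
    (hp : p0 ≠ 0) (C : ℂ) (A : Matrix (Fin 3) (Fin 3) ℂ)
    (hsol : SolvesAttractor p0 q0 P Q C A) :
    Cof (Matrix.of fun i j => (A i j).im : Matrix (Fin 3) (Fin 3) ℝ)
        = (Complex.normSq C)⁻¹ • attrR p0 P Q ∧
      2 * C.im * Complex.normSq C *
          (Matrix.of fun i j => (A i j).im : Matrix (Fin 3) (Fin 3) ℝ).det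
        = - attrM p0 q0 P Q := by
  obtain ⟨h0, hP, hQ, hq⟩ := hsol
  subst h0
  have hC : C ≠ 0 := fun h => hp (by simp [h])
  have hN : C.re ^ 2 + C.im ^ 2 ≠ 0 := by
    have := (Complex.normSq_pos.mpr hC).ne'
    simpa [Complex.normSq_apply, sq] using this
  have hPdef : P = Matrix.of fun i j => (C * A i j).re := by
    ext i j; exact (hP i j).symm
  have hQdef : Q = Matrix.of fun i j => -(C * Cof A i j).re := by
    ext i j; rw [Matrix.of_apply, hQ i j, neg_neg]
  subst hPdef hQdef hq
  constructor
  · ext i j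
    fin_cases i <;> fin_cases j <;>
    · simp only [Cof, attrR, Matrix.adjugate_fin_three, Matrix.transpose_apply,
        Matrix.smul_apply, Matrix.add_apply, Matrix.of_apply, Complex.mul_re,
        Complex.normSq_apply, Matrix.cons_val', Matrix.cons_val_zero, Matrix.cons_val_one,
        Matrix.head_cons, Matrix.empty_val', Matrix.cons_val_fin_one, Matrix.head_fin_const,
        smul_eq_mul, ← sq, Fin.reduceFinMk, Matrix.cons_val, Complex.sub_re, Complex.add_re,
        Complex.neg_re, Complex.mul_im, Complex.sub_im, Complex.add_im, Complex.neg_im]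
      field_simp
      ring
  · simp only [Cof, attrM, Matrix.det_fin_three, Matrix.trace_fin_three,
      Matrix.adjugate_fin_three, Matrix.transpose_apply, Matrix.mul_apply,
      Fin.sum_univ_three, Matrix.of_apply, Complex.mul_re, Complex.mul_im,
      Complex.normSq_apply, Complex.add_re, Complex.add_im, Complex.sub_re, Complex.sub_im,
      Matrix.cons_val', Matrix.cons_val_zero, Matrix.cons_val_one, Matrix.head_cons,
      Matrix.empty_val', Matrix.cons_val_fin_one, Matrix.head_fin_const, Matrix.cons_val_two, Matrix.tail_cons, Complex.neg_re, Complex.neg_im]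
    ring
end

section
/- Let D be a positive integer and let T ∈ M₃(ℂ) be a symmetric matrix whose imaginary part Im(T) is positive definite. Suppose there exists R ∈ M₃(ℤ) such that Im(T)·R = √D·E₃ and Re(T)·R ∈ M₃(ℤ) (equivalently, T·R ∈ M₃(ℤ) + i·√D·E₃). Then there exist p⁰ ∈ ℤ, q₀ ∈ ℚ, P, Q ∈ M₃(ℚ), not all zero, and C ∈ ℂ such that the pair (C, T) solves the attractor system for (p⁰, q₀, P, Q). (Hence every abelian 3-fold with Picard number 9 is a complex attractor variety.) -/
open Matrix Complex

namespace AttractorAux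

noncomputable def SR (D : ℚ) (d : ℝ) (hd : (d:ℂ)*(d:ℂ) = (D:ℂ)) : Subring ℂ where
  carrier := {x | ∃ a b : ℚ, x = (a:ℂ) + (b:ℂ)*(d:ℂ)*Complex.I}
  one_mem' := ⟨1, 0, by push_cast; ring⟩
  zero_mem' := ⟨0, 0, by push_cast; ring⟩
  add_mem' := by
    rintro x y ⟨a,b,rfl⟩ ⟨a',b',rfl⟩
    exact ⟨a+a', b+b', by push_cast; ring⟩
  neg_mem' := by
    rintro x ⟨a,b,rfl⟩
    exact ⟨-a, -b, by push_cast; ring⟩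
  mul_mem' := by
    rintro x y ⟨a,b,rfl⟩ ⟨a',b',rfl⟩
    refine ⟨a*a' - D*(b*b'), a*b' + a'*b, ?_⟩
    have hI : Complex.I * Complex.I = -1 := Complex.I_mul_I
    push_cast
    linear_combination ((b:ℂ)*(b':ℂ)*Complex.I*Complex.I) * hd + ((D:ℂ)*(b:ℂ)*(b':ℂ)) * hI

lemma mem_SR_iff {D : ℚ} {d : ℝ} {hd : (d:ℂ)*(d:ℂ) = (D:ℂ)} {x : ℂ} :
    x ∈ SR D d hd ↔ ∃ a b : ℚ, x = (a:ℂ) + (b:ℂ)*(d:ℂ)*Complex.I := Iff.rfl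

lemma det_cof_mem (S : Subring ℂ) (A : Matrix (Fin 3) (Fin 3) ℂ)
    (h : ∀ i j, A i j ∈ S) : A.det ∈ S ∧ ∀ i j, (Matrix.adjugate A)ᵀ i j ∈ S := by
  set A' : Matrix (Fin 3) (Fin 3) S := Matrix.of fun i j => (⟨A i j, h i j⟩ : S) with hA'
  have hmap : S.subtype.mapMatrix A' = A := by ext i j; rfl
  constructor
  · have h1 : S.subtype A'.det = A.det := by rw [S.subtype.map_det, hmap]
    rw [← h1]; exact SetLike.coe_mem _
  · intro i j
    have h2 : S.subtype.mapMatrix A'.adjugate = A.adjugate := by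
      rw [S.subtype.map_adjugate, hmap]
    have h3 : A.adjugate j i = S.subtype (A'.adjugate j i) := by rw [← h2]; rfl
    rw [Matrix.transpose_apply, h3]; exact SetLike.coe_mem _

lemma re_key (d : ℝ) (hd : d ≠ 0) (a b : ℚ) :
    ((Complex.I * (d:ℂ)⁻¹) * ((a:ℂ) + (b:ℂ)*(d:ℂ)*Complex.I)).re = -b := by
  have h : (Complex.I * (d:ℂ)⁻¹) * ((a:ℂ) + (b:ℂ)*(d:ℂ)*Complex.I)
      = ((-b : ℚ):ℂ) + (((a:ℝ)/d : ℝ):ℂ) * Complex.I := by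
    have hdc : (d:ℂ) ≠ 0 := by exact_mod_cast hd
    field_simp
    ring_nf
    simp [Complex.I_sq]
    field_simp
  rw [h]; simp

end AttractorAux

/-- Theorem B.1 (Theorem 2.17): let `D` be a positive integer and `T` a symmetric complex
3×3 matrix with positive definite imaginary part, such that for some integral `R` we have
`Im(T)·R = √D·E₃` and `Re(T)·R` integral. Then there are `p⁰ ∈ ℤ`, `q₀ ∈ ℚ`,
`P, Q ∈ M₃(ℚ)`, not all zero, and `C ∈ ℂ`, such that `(C, T)` solves the attractor system
for `(p⁰, q₀, P, Q)`. (Every abelian 3-fold of Picard number 9 is an attractor variety.) -/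
theorem abelian_threefold_picard_nine_is_attractor (D : ℕ) (hD : 0 < D)
    (T : Matrix (Fin 3) (Fin 3) ℂ) (hsym : Tᵀ = T)
    (hpos : (Matrix.of fun i j => (T i j).im : Matrix (Fin 3) (Fin 3) ℝ).PosDef)
    (R : Matrix (Fin 3) (Fin 3) ℤ)
    (hIm : (Matrix.of fun i j => (T i j).im : Matrix (Fin 3) (Fin 3) ℝ)
        * Matrix.map R (fun n : ℤ => (n : ℝ))
        = Real.sqrt (D : ℝ) • (1 : Matrix (Fin 3) (Fin 3) ℝ))
    (hRe : ∃ S : Matrix (Fin 3) (Fin 3) ℤ,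
        (Matrix.of fun i j => (T i j).re : Matrix (Fin 3) (Fin 3) ℝ)
            * Matrix.map R (fun n : ℤ => (n : ℝ))
          = Matrix.map S (fun n : ℤ => (n : ℝ))) :
    ∃ (p0 : ℤ) (q0 : ℚ) (P Q : Matrix (Fin 3) (Fin 3) ℚ),
      ¬(p0 = 0 ∧ q0 = 0 ∧ P = 0 ∧ Q = 0) ∧
      ∃ C : ℂ, SolvesAttractor (p0 : ℝ) (q0 : ℝ)
        (Matrix.map P (fun x : ℚ => (x : ℝ))) (Matrix.map Q (fun x : ℚ => (x : ℝ))) C T := by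
  classical
  obtain ⟨S0, hS⟩ := hRe
  set d : ℝ := Real.sqrt (D : ℝ) with hddef
  have hd0 : 0 < d := Real.sqrt_pos.2 (by positivity)
  have hdD : d * d = (D : ℝ) := Real.mul_self_sqrt (by positivity)
  set Dq : ℚ := (D : ℚ) with hDq
  have hd : (d:ℂ)*(d:ℂ) = ((Dq : ℚ):ℂ) := by
    rw [← Complex.ofReal_mul, hdD, hDq]; push_cast; ring
  set Y : Matrix (Fin 3) (Fin 3) ℝ := Matrix.of fun i j => (T i j).im with hYdef
  set X : Matrix (Fin 3) (Fin 3) ℝ := Matrix.of fun i j => (T i j).re with hXdef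
  set Rr : Matrix (Fin 3) (Fin 3) ℝ := Matrix.map R (fun n : ℤ => (n : ℝ)) with hRr
  set Rq : Matrix (Fin 3) (Fin 3) ℚ := Matrix.map R (fun n : ℤ => (n : ℚ)) with hRq
  set Sq : Matrix (Fin 3) (Fin 3) ℚ := Matrix.map S0 (fun n : ℤ => (n : ℚ)) with hSq
  have hRcast : Rr = Rq.map (fun x : ℚ => (x : ℝ)) := by
    ext i j; simp [hRr, hRq, Matrix.map_apply]
  have hScast : Matrix.map S0 (fun n : ℤ => (n : ℝ)) = Sq.map (fun x : ℚ => (x : ℝ)) := by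
    ext i j; simp [hSq, Matrix.map_apply]
  -- det of Rr nonzero
  have hdetR : Rr.det ≠ 0 := by
    intro h0
    have h1 : (Y * Rr).det = (d • (1 : Matrix (Fin 3) (Fin 3) ℝ)).det := by rw [hIm]
    rw [Matrix.det_mul, h0, mul_zero, Matrix.det_smul, Matrix.det_one, mul_one] at h1
    have : d ^ (3:ℕ) ≠ 0 := by positivity
    simp [Fintype.card_fin] at h1
    exact this h1.symm
  have hdetcast : ((Rq.det : ℚ) : ℝ) = Rr.det := by
    have e1 := RingHom.map_det (Rat.castHom ℝ) Rq
    rw [RingHom.mapMatrix_apply, Rat.coe_castHom] at e1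
    rw [hRcast]; exact e1
  have hdetq : Rq.det ≠ 0 := by
    intro h0; apply hdetR; rw [← hdetcast, h0]; simp
  have hadjcast : ∀ i j, ((Rq.adjugate i j : ℚ) : ℝ) = Rr.adjugate i j := by
    intro i j
    have e1 := RingHom.map_adjugate (Rat.castHom ℝ) Rq
    rw [RingHom.mapMatrix_apply, RingHom.mapMatrix_apply, Rat.coe_castHom] at e1
    rw [hRcast, ← e1]
    simp [Matrix.map_apply]
  -- det Rr • Y = d • adjugate Rr
  have hY1 : Rr.det • Y = d • Rr.adjugate := by
    have h1 : Y * Rr * Rr.adjugate = (d • (1 : Matrix (Fin 3) (Fin 3) ℝ)) * Rr.adjugate := by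
      rw [hIm]
    rwa [Matrix.mul_assoc, Matrix.mul_adjugate, Matrix.mul_smul, Matrix.mul_one,
      Matrix.smul_mul, Matrix.one_mul] at h1
  set Nq : Matrix (Fin 3) (Fin 3) ℚ := Rq.det⁻¹ • Rq.adjugate with hNq
  have hYij : ∀ i j, Y i j = d * ((Nq i j : ℚ) : ℝ) := by
    intro i j
    have h1 : Rr.det * Y i j = d * Rr.adjugate i j := by
      have := congrFun (congrFun hY1 i) j
      simpa [Matrix.smul_apply] using this
    have h2 : ((Nq i j : ℚ) : ℝ) = (Rq.det : ℝ)⁻¹ * (Rq.adjugate i j : ℝ) := by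
      simp [hNq, Matrix.smul_apply]
    rw [h2, hadjcast, hdetcast]
    field_simp
    linarith [h1]
  -- det Rr • X = Sr * adjugate Rr
  have hX1 : Rr.det • X = Matrix.map S0 (fun n : ℤ => (n : ℝ)) * Rr.adjugate := by
    have h1 : X * Rr * Rr.adjugate = Matrix.map S0 (fun n : ℤ => (n : ℝ)) * Rr.adjugate := by
      rw [hS]
    rwa [Matrix.mul_assoc, Matrix.mul_adjugate, Matrix.mul_smul, Matrix.mul_one] at h1
  set Xq : Matrix (Fin 3) (Fin 3) ℚ := Rq.det⁻¹ • (Sq * Rq.adjugate) with hXq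
  have hXij : ∀ i j, X i j = ((Xq i j : ℚ) : ℝ) := by
    intro i j
    have h1 : Rr.det * X i j = (Matrix.map S0 (fun n : ℤ => (n : ℝ)) * Rr.adjugate) i j := by
      have := congrFun (congrFun hX1 i) j
      simpa [Matrix.smul_apply] using this
    have h2 : (((Sq * Rq.adjugate) i j : ℚ) : ℝ)
        = (Matrix.map S0 (fun n : ℤ => (n : ℝ)) * Rr.adjugate) i j := by
      have e1 := RingHom.map_adjugate (Rat.castHom ℝ) Rq
      have e2 := map_mul (RingHom.mapMatrix (Rat.castHom ℝ)) Sq Rq.adjugate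
      simp only [RingHom.mapMatrix_apply, Rat.coe_castHom] at e1 e2
      rw [hScast, hRcast, ← e1, ← e2]
      simp [Matrix.map_apply]
    have h3 : ((Xq i j : ℚ) : ℝ) = (Rq.det : ℝ)⁻¹ * (((Sq * Rq.adjugate) i j : ℚ) : ℝ) := by
      simp [hXq, Matrix.smul_apply]
    rw [h3, h2, hdetcast]
    field_simp
    linarith [h1]
  -- entries of T
  have hTij : ∀ i j, T i j = ((Xq i j : ℚ):ℂ) + ((Nq i j : ℚ):ℂ) * (d:ℂ) * Complex.I := by
    intro i j
    have h0 : T i j = ((T i j).re : ℂ) + ((T i j).im : ℂ) * Complex.I :=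
      (Complex.re_add_im _).symm
    have hx : (T i j).re = ((Xq i j : ℚ) : ℝ) := hXij i j
    have hy : (T i j).im = d * ((Nq i j : ℚ) : ℝ) := hYij i j
    rw [h0, hx, hy]
    push_cast
    ring
  have hT : ∀ i j, T i j ∈ AttractorAux.SR Dq d hd := fun i j => ⟨Xq i j, Nq i j, hTij i j⟩
  obtain ⟨hdet_mem, hcof_mem⟩ := AttractorAux.det_cof_mem _ T hT
  obtain ⟨ad, bd, hdetx⟩ := hdet_mem
  simp only [AttractorAux.mem_SR_iff] at hcof_mem
  choose qa qb hq using hcof_mem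
  refine ⟨0, -bd, -Nq, Matrix.of fun i j => qb i j, ?_, Complex.I * (d:ℂ)⁻¹, ?_, ?_, ?_, ?_⟩
  · rintro ⟨-, -, hP, -⟩
    have hN0 : Nq = 0 := by simpa using congrArg Neg.neg hP
    have hY0 : Y = 0 := by
      ext i j; rw [hYij i j, hN0]; simp
    have := hpos.det_pos
    rw [hY0] at this
    simp at this
  · simp [← Complex.ofReal_inv]
  · intro i j
    rw [hTij i j, AttractorAux.re_key d hd0.ne']
    simp [Matrix.map_apply]
  · intro i j
    show (Complex.I * (d:ℂ)⁻¹ * (Matrix.adjugate T)ᵀ i j).re = _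
    rw [hq i j, AttractorAux.re_key d hd0.ne']
    simp [Matrix.map_apply]
  · rw [hdetx, AttractorAux.re_key d hd0.ne']
    push_cast
    ring
end

section
/- Let B : ℝⁿ × ℝⁿ → ℝ be a symmetric bilinear form, extended ℂ-bilinearly to ℂⁿ × ℂⁿ. Let u₁, u₂ ∈ ℝⁿ, C ∈ ℂ with C ≠ 0, τ ∈ ℂ with Im(τ) ≠ 0, and Ω ∈ ℂⁿ such that u₁ = Re(C·Ω) and u₂ = Re(C·τ·Ω) (real parts coordinatewise, with ℝⁿ ⊂ ℂⁿ). Then: (1) Ω = (−i/(C·Im(τ)))·(u₂ − conj(τ)·u₁); and (2) if in addition B(Ω, Ω) = 0, then B(u₁,u₁)·τ² − 2·B(u₁,u₂)·τ + B(u₂,u₂) = 0. -/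
open Complex

/-- The computational core of Theorem 2.15 / Proposition 4.11: given a symmetric bilinear
form `B` on `ℝⁿ` with ℂ-bilinear extension `Bc`, if `u₁ = Re(C·Ω)` and `u₂ = Re(C·τ·Ω)`
with `C ≠ 0` and `Im τ ≠ 0`, then (1) `Ω = (−i/(C·Im τ))·(u₂ − conj(τ)·u₁)`, and
(2) if `Bc(Ω, Ω) = 0` then `B(u₁,u₁)·τ² − 2·B(u₁,u₂)·τ + B(u₂,u₂) = 0`. -/
theorem rank_two_attractor_core (n : ℕ)
    (B : (Fin n → ℝ) →ₗ[ℝ] (Fin n → ℝ) →ₗ[ℝ] ℝ)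
    (hBsymm : ∀ u v, B u v = B v u)
    (Bc : (Fin n → ℂ) →ₗ[ℂ] (Fin n → ℂ) →ₗ[ℂ] ℂ)
    (hext : ∀ u v : Fin n → ℝ,
      Bc (fun i => ((u i : ℝ) : ℂ)) (fun i => ((v i : ℝ) : ℂ)) = ((B u v : ℝ) : ℂ))
    (u₁ u₂ : Fin n → ℝ) (C : ℂ) (hC : C ≠ 0) (τ : ℂ) (hτ : τ.im ≠ 0)
    (Ω : Fin n → ℂ)
    (h₁ : ∀ i, u₁ i = (C * Ω i).re) (h₂ : ∀ i, u₂ i = (C * τ * Ω i).re) :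
    (Ω = fun i => -Complex.I / (C * ((τ.im : ℝ) : ℂ)) *
        (((u₂ i : ℝ) : ℂ) - (starRingEnd ℂ) τ * ((u₁ i : ℝ) : ℂ))) ∧
    (Bc Ω Ω = 0 →
      ((B u₁ u₁ : ℝ) : ℂ) * τ ^ 2 - 2 * ((B u₁ u₂ : ℝ) : ℂ) * τ + ((B u₂ u₂ : ℝ) : ℂ) = 0) := by
  have him : ((τ.im : ℝ) : ℂ) ≠ 0 := by exact_mod_cast hτ
  have key : ∀ i, (((u₂ i : ℝ) : ℂ) - (starRingEnd ℂ) τ * ((u₁ i : ℝ) : ℂ))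
      = C * Ω i * (Complex.I * ((τ.im : ℝ) : ℂ)) := by
    intro i
    rw [h₁ i, h₂ i]
    simp [Complex.ext_iff, Complex.mul_re, Complex.mul_im]
    constructor <;> ring
  have part1 : Ω = fun i => -Complex.I / (C * ((τ.im : ℝ) : ℂ)) *
      (((u₂ i : ℝ) : ℂ) - (starRingEnd ℂ) τ * ((u₁ i : ℝ) : ℂ)) := by
    funext i
    rw [key i]
    field_simp
    ring_nf
    rw [Complex.I_sq]
    ring
  refine ⟨part1, ?_⟩
  intro hBcΩ
  set k : ℂ := -Complex.I / (C * ((τ.im : ℝ) : ℂ)) with hk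
  have hkne : k ≠ 0 := by
    rw [hk]
    exact div_ne_zero (by simp [Complex.I_ne_zero]) (mul_ne_zero hC him)
  set v₁ : Fin n → ℂ := fun i => ((u₁ i : ℝ) : ℂ) with hv₁
  set v₂ : Fin n → ℂ := fun i => ((u₂ i : ℝ) : ℂ) with hv₂
  have hΩ : Ω = k • (v₂ - (starRingEnd ℂ) τ • v₁) := by
    funext i
    rw [part1]
    simp [hv₁, hv₂, Pi.smul_apply, smul_eq_mul]
  have hexp : Bc Ω Ω = k ^ 2 * (Bc v₂ v₂ - (starRingEnd ℂ) τ * Bc v₂ v₁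
      - (starRingEnd ℂ) τ * Bc v₁ v₂ + (starRingEnd ℂ) τ ^ 2 * Bc v₁ v₁) := by
    rw [hΩ]
    simp only [map_smul, map_sub, LinearMap.smul_apply, LinearMap.sub_apply,
      map_smul, smul_eq_mul]
    ring
  have h11 : Bc v₁ v₁ = ((B u₁ u₁ : ℝ) : ℂ) := hext u₁ u₁
  have h12 : Bc v₁ v₂ = ((B u₁ u₂ : ℝ) : ℂ) := hext u₁ u₂
  have h21 : Bc v₂ v₁ = ((B u₁ u₂ : ℝ) : ℂ) := by rw [hext u₂ u₁, hBsymm u₂ u₁]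
  have h22 : Bc v₂ v₂ = ((B u₂ u₂ : ℝ) : ℂ) := hext u₂ u₂
  rw [hexp, h11, h12, h21, h22] at hBcΩ
  have hquad : ((B u₂ u₂ : ℝ) : ℂ) - 2 * (starRingEnd ℂ) τ * ((B u₁ u₂ : ℝ) : ℂ)
      + (starRingEnd ℂ) τ ^ 2 * ((B u₁ u₁ : ℝ) : ℂ) = 0 := by
    have := mul_eq_zero.mp hBcΩ
    rcases this with h | h
    · exact absurd (pow_eq_zero_iff (n := 2) (by norm_num) |>.mp h) hkne
    · linear_combination h
  have := congrArg (starRingEnd ℂ) hquad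
  simp only [map_add, map_sub, map_mul, map_pow, map_ofNat, Complex.conj_ofReal,
    Complex.conj_conj, map_zero] at this
  linear_combination this
end

section
/- Let B : ℤ² × ℤ² → ℤ be a symmetric bilinear form that is positive definite (B(u,u) > 0 for all u ≠ 0) and even (B(u,u) ∈ 2ℤ for all u). Then the set Q := { (B(u₁,u₂) + i·√(B(u₁,u₁)·B(u₂,u₂) − B(u₁,u₂)²)) / B(u₁,u₁) : u₁, u₂ ∈ ℤ² linearly independent over ℤ } is dense in the upper half-plane ℍ = {τ ∈ ℂ : Im(τ) > 0}. -/
open Complex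

/-- Lemma 2.20: for a positive definite even symmetric bilinear form `B` on `ℤ²`, the set
`Q = {(B(u₁,u₂) + i·√(B(u₁,u₁)B(u₂,u₂) − B(u₁,u₂)²))/B(u₁,u₁) : u₁, u₂ lin. indep.}`
is dense in the upper half-plane. -/
theorem tau_set_dense (B : (Fin 2 → ℤ) →ₗ[ℤ] (Fin 2 → ℤ) →ₗ[ℤ] ℤ)
    (hsymm : ∀ u v, B u v = B v u)
    (hpos : ∀ u, u ≠ 0 → 0 < B u u)
    (heven : ∀ u, 2 ∣ B u u) :
    ∀ τ : ℂ, 0 < τ.im →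
      τ ∈ closure {z : ℂ | ∃ u₁ u₂ : Fin 2 → ℤ, LinearIndependent ℤ ![u₁, u₂] ∧
        z = (((B u₁ u₂ : ℤ) : ℂ) + Complex.I *
              (Real.sqrt (((B u₁ u₁ * B u₂ u₂ - (B u₁ u₂) ^ 2 : ℤ) : ℝ)) : ℂ)) /
            ((B u₁ u₁ : ℤ) : ℂ)} := by
  intro τ hτ
  set e₁ : Fin 2 → ℤ := ![1, 0] with he₁
  set e₂ : Fin 2 → ℤ := ![0, 1] with he₂
  set a : ℤ := B e₁ e₁ with hadef
  set b : ℤ := B e₁ e₂ with hbdef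
  set c : ℤ := B e₂ e₂ with hcdef
  have hB : ∀ m n m' n' : ℤ, B ![m, n] ![m', n'] =
      m * m' * a + (m * n' + n * m') * b + n * n' * c := by
    intro m n m' n'
    have h1 : (![m, n] : Fin 2 → ℤ) = m • e₁ + n • e₂ := by
      funext i; fin_cases i <;> simp [he₁, he₂]
    have h2 : (![m', n'] : Fin 2 → ℤ) = m' • e₁ + n' • e₂ := by
      funext i; fin_cases i <;> simp [he₁, he₂]
    rw [h1, h2]
    simp only [map_add, map_smul, LinearMap.add_apply, LinearMap.smul_apply, smul_eq_mul]
    rw [hsymm e₂ e₁]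
    ring
  have ha : 0 < a := by
    apply hpos
    intro h
    have := congrFun h 0
    simp [he₁] at this
  have hd : 0 < a * c - b ^ 2 := by
    have hu : (![-b, a] : Fin 2 → ℤ) ≠ 0 := by
      intro h
      have := congrFun h 1
      simp at this
      omega
    have h := hpos _ hu
    rw [hB] at h
    nlinarith
  -- real quantities
  have haR : (0:ℝ) < (a:ℝ) := by exact_mod_cast ha
  set s : ℝ := Real.sqrt ((a * c - b ^ 2 : ℤ) : ℝ) with hsdef
  have hs : 0 < s := Real.sqrt_pos.mpr (by exact_mod_cast hd)
  rw [Metric.mem_closure_iff]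
  intro ε hε
  set x : ℝ := τ.re with hx
  set y : ℝ := τ.im with hy
  obtain ⟨N, hN⟩ := exists_nat_gt ((1/2 + s / (a:ℝ)) / ε)
  have hNpos : (0:ℝ) < (N:ℝ) := by
    refine lt_trans ?_ hN
    positivity
  have hNne : ((N:ℤ):ℝ) ≠ 0 := by push_cast; linarith
  -- choose q
  set t : ℝ := (N:ℝ) * (a:ℝ) * y / s with ht
  set q : ℤ := ⌊t⌋ + 1 with hqdef
  have htpos : 0 < t := by positivity
  have hq1 : t < (q:ℝ) := by
    rw [hqdef]; push_cast; exact Int.lt_floor_add_one t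
  have hq2 : (q:ℝ) ≤ t + 1 := by
    rw [hqdef]; push_cast; linarith [Int.floor_le t]
  have hqpos : 0 < q := by exact_mod_cast lt_trans htpos hq1
  have hqR : (0:ℝ) < (q:ℝ) := by exact_mod_cast hqpos
  clear_value q
  -- choose p
  set p : ℤ := round ((N:ℝ) * x - (q:ℝ) * (b:ℝ) / (a:ℝ)) with hpdef
  have hp : |((N:ℝ) * x - (q:ℝ) * (b:ℝ) / (a:ℝ)) - (p:ℝ)| ≤ 1/2 := by
    rw [hpdef]; exact abs_sub_round _
  clear_value p
  -- the vectors
  set u₁ : Fin 2 → ℤ := ![(N:ℤ), 0] with hu₁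
  set u₂ : Fin 2 → ℤ := ![p, q] with hu₂
  have hNZ : (N:ℤ) ≠ 0 := by
    intro h
    rw [h] at hNne
    simp at hNne
  have hli : LinearIndependent ℤ ![u₁, u₂] := by
    rw [LinearIndependent.pair_iff]
    intro σ ρ h
    have h1 := congrFun h 1
    have h0 := congrFun h 0
    simp [hu₁, hu₂] at h1 h0
    have hq0 : q ≠ 0 := ne_of_gt hqpos
    have hρ : ρ = 0 := by
      rcases h1 with h | h
      · exact h
      · exact absurd h hq0
    refine ⟨?_, hρ⟩
    rw [hρ] at h0
    simp at h0
    rcases h0 with h | h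
    · exact h
    · exact absurd (by exact_mod_cast h : (N:ℤ) = 0) hNZ
  have hB11 : B u₁ u₁ = (N:ℤ)^2 * a := by rw [hu₁, hB]; ring
  have hB12 : B u₁ u₂ = (N:ℤ) * (p * a + q * b) := by rw [hu₁, hu₂, hB]; ring
  have hB22 : B u₂ u₂ = p^2 * a + 2 * p * q * b + q^2 * c := by rw [hu₂, hB]; ring
  have hD : B u₁ u₁ * B u₂ u₂ - (B u₁ u₂)^2 = ((N:ℤ) * q)^2 * (a * c - b^2) := by
    rw [hB11, hB12, hB22]; ring
  -- the sqrt
  have hsqrt : Real.sqrt (((B u₁ u₁ * B u₂ u₂ - (B u₁ u₂) ^ 2 : ℤ) : ℝ)) =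
      (N:ℝ) * (q:ℝ) * s := by
    rw [hD, hsdef]
    push_cast
    rw [Real.sqrt_mul (by positivity)]
    rw [Real.sqrt_sq (by positivity)]
  -- the point
  refine ⟨_, ⟨u₁, u₂, hli, rfl⟩, ?_⟩
  have hNc : ((N:ℝ):ℂ) ≠ 0 := by exact_mod_cast hNne
  have hac : ((a:ℝ):ℂ) ≠ 0 := by exact_mod_cast ne_of_gt haR
  have hz : (((B u₁ u₂ : ℤ) : ℂ) + Complex.I *
        (Real.sqrt (((B u₁ u₁ * B u₂ u₂ - (B u₁ u₂) ^ 2 : ℤ) : ℝ)) : ℂ)) /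
        ((B u₁ u₁ : ℤ) : ℂ) =
      ((((p:ℝ) * (a:ℝ) + (q:ℝ) * (b:ℝ)) / ((N:ℝ) * (a:ℝ)) : ℝ) : ℂ) +
      (((q:ℝ) * s / ((N:ℝ) * (a:ℝ)) : ℝ) : ℂ) * Complex.I := by
    rw [hsqrt, hB11, hB12]
    have hNc' : ((N:ℕ):ℂ) ≠ 0 := by exact_mod_cast hNc
    have hac' : ((a:ℤ):ℂ) ≠ 0 := by exact_mod_cast hac
    push_cast
    field_simp
  rw [hz, Complex.dist_eq]
  set zr : ℝ := ((p:ℝ) * (a:ℝ) + (q:ℝ) * (b:ℝ)) / ((N:ℝ) * (a:ℝ)) with hzr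
  set zi : ℝ := (q:ℝ) * s / ((N:ℝ) * (a:ℝ)) with hzi
  have hre : (τ - ((zr:ℂ) + (zi:ℂ) * Complex.I)).re = x - zr := by simp [hx]
  have him : (τ - ((zr:ℂ) + (zi:ℂ) * Complex.I)).im = y - zi := by simp [hy]
  calc ‖τ - ((zr:ℂ) + (zi:ℂ) * Complex.I)‖
      ≤ |(τ - ((zr:ℂ) + (zi:ℂ) * Complex.I)).re| +
        |(τ - ((zr:ℂ) + (zi:ℂ) * Complex.I)).im| :=
        Complex.norm_le_abs_re_add_abs_im _
    _ = |x - zr| + |y - zi| := by rw [hre, him]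
    _ ≤ 1/(2*(N:ℝ)) + s/((N:ℝ)*(a:ℝ)) := by
        gcongr
        · -- real part bound
          have heq : x - zr = (((N:ℝ) * x - (q:ℝ) * (b:ℝ) / (a:ℝ)) - (p:ℝ)) / (N:ℝ) := by
            rw [hzr]; field_simp; ring
          rw [heq, abs_div, abs_of_pos hNpos]
          rw [div_le_div_iff₀ hNpos (by positivity)]
          calc |(N:ℝ) * x - (q:ℝ) * (b:ℝ) / (a:ℝ) - (p:ℝ)| * (2 * (N:ℝ))
              ≤ (1/2) * (2 * (N:ℝ)) := by
                apply mul_le_mul_of_nonneg_right hp (by positivity)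
            _ = 1 * (N:ℝ) := by ring
        · -- imaginary part bound
          have hyeq : y = t * s / ((N:ℝ) * (a:ℝ)) := by
            rw [ht]; field_simp
          rw [hzi, hyeq]
          have heq2 : t * s / ((N:ℝ) * (a:ℝ)) - (q:ℝ) * s / ((N:ℝ) * (a:ℝ)) =
              (t - (q:ℝ)) * s / ((N:ℝ) * (a:ℝ)) := by ring
          rw [heq2, abs_div, abs_of_pos (by positivity : (0:ℝ) < (N:ℝ) * (a:ℝ))]
          rw [abs_mul, abs_of_pos hs]
          have hab : |t - (q:ℝ)| ≤ 1 := by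
            rw [abs_le]; constructor <;> linarith
          rw [div_le_div_iff₀ (by positivity) (by positivity)]
          calc |t - (q:ℝ)| * s * ((N:ℝ) * (a:ℝ)) ≤ 1 * s * ((N:ℝ) * (a:ℝ)) := by
                apply mul_le_mul_of_nonneg_right
                  (mul_le_mul_of_nonneg_right hab (le_of_lt hs)) (by positivity)
            _ = s * ((N:ℝ) * (a:ℝ)) := by ring
    _ = (1/2 + s/(a:ℝ)) / (N:ℝ) := by field_simp
    _ < ε := by
        rw [div_lt_iff₀ hNpos]
        have := (div_lt_iff₀ hε).mp hN
        linarith [mul_comm ε (N:ℝ)]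
end
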